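/- Fix n ≥ 1 and an integer m ≥ 2. For a permutation π of {1,…,n} avoiding every pattern of A_m, define σ as follows: σ(i) = π(i) for every position i such that at most m−3 indices j < i satisfy π(j) < π(i), and the remaining values of π are placed on the remaining positions in decreasing order (larger values at smaller positions). Then σ is a permutation of {1,…,n} that avoids every pattern of B_m, and the map π ↦ σ is a bijection from the set of permutations of {1,…,n} avoiding every pattern of A_m onto the set of permutations of {1,…,n} avoiding every pattern of B_m. -/

import Mathlib

/-- `π` contains the pattern `τ` if there is a strictly increasing sequence of indices
along which the values of `π` are in the same relative order as the values of `τ`. -/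
def Contains {n m : ℕ} (π : Equiv.Perm (Fin n)) (τ : Equiv.Perm (Fin m)) : Prop :=
  ∃ f : Fin m → Fin n, StrictMono f ∧ ∀ s t : Fin m, π (f s) < π (f t) ↔ τ s < τ t

/-- Position `i` is a "low" position of `π` (w.r.t. `m`) if at most `m - 3` indices
`j < i` satisfy `π j < π i`. -/
def LowPos (n m : ℕ) (π : Equiv.Perm (Fin n)) (i : Fin n) : Prop :=
  (Nat.card {j : Fin n // j < i ∧ π j < π i} : ℤ) ≤ (m : ℤ) - 3

namespace AB

open Finset

variable {n m : ℕ}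

/-- number of positions `j < p` whose value is `< v` -/
def cnt (ρ : Fin n → Fin n) (p v : Fin n) : ℕ :=
  (Finset.univ.filter fun j => j < p ∧ ρ j < v).card

/-- "low position" -/
def low (m : ℕ) (ρ : Fin n → Fin n) (i : Fin n) : Prop :=
  cnt ρ i (ρ i) + 3 ≤ m

instance (m : ℕ) (ρ : Fin n → Fin n) (i : Fin n) : Decidable (low m ρ i) := by
  unfold low; infer_instance

lemma lowPos_iff (ρ : Equiv.Perm (Fin n)) (i : Fin n) :
    LowPos n m ρ i ↔ low m (⇑ρ) i := by
  have : Nat.card {j : Fin n // j < i ∧ ρ j < ρ i}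
      = (Finset.univ.filter fun j => j < i ∧ ρ j < ρ i).card := by
    rw [Nat.card_eq_fintype_card, Fintype.card_subtype]
  rw [LowPos, this, low, cnt]
  omega

lemma cnt_mono (ρ : Fin n → Fin n) {p p' v v' : Fin n} (hp : p ≤ p') (hv : v ≤ v') :
    cnt ρ p v ≤ cnt ρ p' v' := by
  apply Finset.card_le_card
  intro j hj
  simp only [Finset.mem_filter, Finset.mem_univ, true_and] at *
  exact ⟨lt_of_lt_of_le hj.1 hp, lt_of_lt_of_le hj.2 hv⟩

lemma nonlow_iff (hm : 2 ≤ m) (ρ : Fin n → Fin n) (i : Fin n) :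
    ¬ low m ρ i ↔ m - 2 ≤ cnt ρ i (ρ i) := by
  unfold low; omega

/-- Lemma 1: in any injective map, a value at a low position is smaller than the value
at any earlier non-low position. -/
lemma lt_of_nonlow_low {ρ : Fin n → Fin n} (hinj : Function.Injective ρ) {j i : Fin n}
    (hj : ¬ low m ρ j) (hi : low m ρ i) (hji : j < i) : ρ i < ρ j := by
  by_contra h
  push_neg at h
  have hne : ρ j ≠ ρ i := fun e => (ne_of_lt hji) (hinj e)
  have hlt : ρ j < ρ i := lt_of_le_of_ne h hne
  have : cnt ρ j (ρ j) ≤ cnt ρ i (ρ i) := by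
    apply Finset.card_le_card
    intro k hk
    simp only [Finset.mem_filter, Finset.mem_univ, true_and] at *
    exact ⟨hk.1.trans hji, hk.2.trans hlt⟩
  unfold low at *
  omega

section Rank

/-- the rank of `u s` among the values of `u` -/
def rank (u : Fin m → Fin n) (s : Fin m) : ℕ :=
  (Finset.univ.filter fun t => u t < u s).card

lemma rank_lt (u : Fin m → Fin n) (s : Fin m) : rank u s < m := by
  have h1 : (Finset.univ.filter fun t => u t < u s) ⊆ Finset.univ.erase s := by
    intro t ht
    simp only [Finset.mem_filter, Finset.mem_univ, true_and, Finset.mem_erase] at *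
    exact ⟨fun e => absurd ht (by rw [e]; exact lt_irrefl _), trivial⟩
  have h2 := Finset.card_le_card h1
  rw [Finset.card_erase_of_mem (Finset.mem_univ s), Finset.card_univ, Fintype.card_fin] at h2
  have : 0 < m := s.pos
  unfold rank
  omega

lemma rank_lt_rank (u : Fin m → Fin n) {s t : Fin m} (h : u s < u t) :
    rank u s < rank u t := by
  apply Finset.card_lt_card
  constructor
  · intro x hx
    simp only [Finset.mem_filter, Finset.mem_univ, true_and] at *
    exact hx.trans h
  · intro hsub
    have := hsub (Finset.mem_filter.2 ⟨Finset.mem_univ s, h⟩)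
    simp only [Finset.mem_filter, Finset.mem_univ, true_and] at this
    exact lt_irrefl _ this

lemma rank_lt_iff (u : Fin m → Fin n) (hu : Function.Injective u) (s t : Fin m) :
    rank u s < rank u t ↔ u s < u t := by
  constructor
  · intro h
    rcases lt_trichotomy (u s) (u t) with h1 | h1 | h1
    · exact h1
    · exact absurd h (by rw [hu h1]; exact lt_irrefl _)
    · exact absurd (rank_lt_rank u h1) (by omega)
  · exact rank_lt_rank u

/-- the pattern (relative order) of an injective map `Fin m → Fin n` -/
noncomputable def rankPerm (u : Fin m → Fin n) (hu : Function.Injective u) :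
    Equiv.Perm (Fin m) :=
  Equiv.ofBijective (fun s => ⟨rank u s, rank_lt u s⟩)
    (Finite.injective_iff_bijective.1 (by
      intro s t hst
      simp only [Fin.mk.injEq] at hst
      by_contra hne
      rcases lt_or_gt_of_ne (fun e : u s = u t => hne (hu e)) with h | h
      · exact absurd hst (ne_of_lt (rank_lt_rank u h))
      · exact absurd hst.symm (ne_of_lt (rank_lt_rank u h))))

lemma rankPerm_apply (u : Fin m → Fin n) (hu : Function.Injective u) (s : Fin m) :
    rankPerm u hu s = ⟨rank u s, rank_lt u s⟩ := rfl

lemma rankPerm_lt_iff (u : Fin m → Fin n) (hu : Function.Injective u) (s t : Fin m) :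
    rankPerm u hu s < rankPerm u hu t ↔ u s < u t := by
  rw [rankPerm_apply, rankPerm_apply, Fin.mk_lt_mk]
  exact rank_lt_iff u hu s t

end Rank

lemma card_val_lt (m k : ℕ) (hk : k ≤ m) :
    ((Finset.univ : Finset (Fin m)).filter fun s : Fin m => (s : ℕ) < k).card = k := by
  have : ((Finset.univ : Finset (Fin m)).filter fun s : Fin m => (s : ℕ) < k)
      = (Finset.univ : Finset (Fin k)).image (Fin.castLE hk) := by
    ext s
    simp only [Finset.mem_filter, Finset.mem_univ, true_and, Finset.mem_image]
    constructor
    · intro hs; exact ⟨⟨s.val, hs⟩, rfl⟩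
    · rintro ⟨t, rfl⟩; exact t.isLt
  rw [this, Finset.card_image_of_injective _ (Fin.castLE_injective hk), Finset.card_univ,
    Fintype.card_fin]

lemma card_filter_lt_emb (S : Finset (Fin n)) {K : ℕ} (h : S.card = K) (s : Fin K) :
    (S.filter (· < S.orderEmbOfFin h s)).card = (s : ℕ) := by
  have himg : S.filter (· < S.orderEmbOfFin h s)
      = (Finset.Iio s).image (S.orderEmbOfFin h) := by
    ext x
    simp only [Finset.mem_filter, Finset.mem_image, Finset.mem_Iio]
    constructor
    · rintro ⟨hxS, hxlt⟩
      have : x ∈ Set.range (S.orderEmbOfFin h) := by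
        rw [Finset.range_orderEmbOfFin]; exact hxS
      obtain ⟨i, rfl⟩ := this
      exact ⟨i, (S.orderEmbOfFin h).strictMono.lt_iff_lt.1 hxlt, rfl⟩
    · rintro ⟨i, hi, rfl⟩
      exact ⟨Finset.orderEmbOfFin_mem S h i, (S.orderEmbOfFin h).strictMono hi⟩
  rw [himg, Finset.card_image_of_injective _ (S.orderEmbOfFin h).injective, Fin.card_Iio]

lemma card_filter_emb_lt (S : Finset (Fin n)) {K : ℕ} (h : S.card = K) (s : Fin K) :
    (S.filter (S.orderEmbOfFin h s < ·)).card = K - 1 - (s : ℕ) := by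
  have hsplit := Finset.card_filter_add_card_filter_not
    (s := S) (p := (· < S.orderEmbOfFin h s))
  have hneg : S.filter (fun x => ¬ x < S.orderEmbOfFin h s)
      = insert (S.orderEmbOfFin h s) (S.filter (S.orderEmbOfFin h s < ·)) := by
    ext x
    simp only [Finset.mem_filter, Finset.mem_insert, not_lt]
    constructor
    · rintro ⟨hxS, hle⟩
      rcases eq_or_lt_of_le hle with h1 | h1
      · exact Or.inl h1.symm
      · exact Or.inr ⟨hxS, h1⟩
    · rintro (rfl | ⟨hxS, hlt⟩)
      · exact ⟨Finset.orderEmbOfFin_mem S h s, le_refl _⟩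
      · exact ⟨hxS, le_of_lt hlt⟩
  have hnotmem : S.orderEmbOfFin h s ∉ S.filter (S.orderEmbOfFin h s < ·) := by
    simp only [Finset.mem_filter]
    exact fun hx => lt_irrefl _ hx.2
  rw [hneg, Finset.card_insert_of_notMem hnotmem,
    card_filter_lt_emb S h s, h] at hsplit
  have := s.isLt
  omega

section Patterns

lemma emb_eq_of_card (S : Finset (Fin n)) {K : ℕ} (h : S.card = K) {x : Fin n} (hx : x ∈ S)
    {k : ℕ} (hkK : k < K) (hcard : (S.filter (· < x)).card = k) :
    S.orderEmbOfFin h ⟨k, hkK⟩ = x := by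
  have : x ∈ Set.range (S.orderEmbOfFin h) := by
    rw [Finset.range_orderEmbOfFin]; exact hx
  obtain ⟨s, rfl⟩ := this
  have hs := card_filter_lt_emb S h s
  rw [hcard] at hs
  have hks : (⟨k, hkK⟩ : Fin K) = s := by
    apply Fin.ext
    simpa using hs
  rw [hks]

lemma build {ρ : Equiv.Perm (Fin n)} {p q w : Fin n} (hm : 2 ≤ m) (hpq : p < q)
    (hwp : w ≤ ρ p) (hwq : w ≤ ρ q) (hne : ρ p ≠ ρ q) (hc : m - 2 ≤ cnt (⇑ρ) p w) :
    ∃ τ : Equiv.Perm (Fin m), Contains ρ τ ∧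
      (ρ q < ρ p → τ ⟨m - 2, by omega⟩ = ⟨m - 1, by omega⟩ ∧
        τ ⟨m - 1, by omega⟩ = ⟨m - 2, by omega⟩) ∧
      (ρ p < ρ q → τ ⟨m - 2, by omega⟩ = ⟨m - 2, by omega⟩ ∧
        τ ⟨m - 1, by omega⟩ = ⟨m - 1, by omega⟩) := by
  set im2 : Fin m := ⟨m - 2, by omega⟩ with him2
  set im1 : Fin m := ⟨m - 1, by omega⟩ with him1
  obtain ⟨S, hSsub, hScard⟩ := Finset.exists_subset_card_eq (n := m - 2)
    (s := Finset.univ.filter fun j => j < p ∧ ρ j < w) hc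
  have hS : ∀ j ∈ S, j < p ∧ ρ j < w := by
    intro j hj
    have := hSsub hj
    simp only [Finset.mem_filter, Finset.mem_univ, true_and] at this
    exact this
  have hqS : q ∉ S := fun hq => absurd ((hS q hq).1.trans hpq) (lt_irrefl q)
  have hpS : p ∉ S := fun hp => absurd (hS p hp).1 (lt_irrefl p)
  have hpqS : p ∉ insert q S := by
    simp only [Finset.mem_insert]
    exact fun h => h.elim (fun e => absurd e (ne_of_lt hpq)) hpS
  set T : Finset (Fin n) := insert p (insert q S) with hTdef
  have hT : T.card = m := by
    rw [hTdef, Finset.card_insert_of_notMem hpqS, Finset.card_insert_of_notMem hqS, hScard]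
    omega
  set f := T.orderEmbOfFin hT with hfdef
  have hTp : T.filter (· < p) = S := by
    ext x
    simp only [hTdef, Finset.mem_filter, Finset.mem_insert]
    constructor
    · rintro ⟨(rfl | rfl | hx), hlt⟩
      · exact absurd hlt (lt_irrefl _)
      · exact absurd (hpq.trans hlt) (lt_irrefl _)
      · exact hx
    · intro hx
      exact ⟨Or.inr (Or.inr hx), (hS x hx).1⟩
  have hTq : T.filter (· < q) = insert p S := by
    ext x
    simp only [hTdef, Finset.mem_filter, Finset.mem_insert]
    constructor
    · rintro ⟨(rfl | rfl | hx), hlt⟩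
      · exact Or.inl rfl
      · exact absurd hlt (lt_irrefl _)
      · exact Or.inr hx
    · rintro (rfl | hx)
      · exact ⟨Or.inl rfl, hpq⟩
      · exact ⟨Or.inr (Or.inr hx), (hS x hx).1.trans hpq⟩
  have hfp : f im2 = p := by
    apply emb_eq_of_card T hT (by simp [hTdef]) _ (by rw [hTp, hScard])
  have hfq : f im1 = q := by
    apply emb_eq_of_card T hT (by simp [hTdef]) _
    rw [hTq, Finset.card_insert_of_notMem hpS, hScard]
    omega
  set u : Fin m → Fin n := fun s => ρ (f s) with hudef
  have hu : Function.Injective u := fun s t hst => f.injective (ρ.injective hst)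
  have hfS : ∀ s : Fin m, (s : ℕ) < m - 2 → f s ∈ S := by
    intro s hs
    have hlt : f s < p := by
      rw [← hfp]
      exact f.strictMono (show s < im2 from hs)
    have hmem : f s ∈ T := Finset.orderEmbOfFin_mem T hT s
    rw [hTdef] at hmem
    simp only [Finset.mem_insert] at hmem
    rcases hmem with he | he | hmem
    · rw [he] at hlt; exact absurd hlt (lt_irrefl _)
    · rw [he] at hlt; exact absurd (hpq.trans hlt) (lt_irrefl _)
    · exact hmem
  have hval : ∀ s : Fin m, (s : ℕ) < m - 2 → ρ (f s) < w := fun s hs => (hS _ (hfS s hs)).2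
  refine ⟨rankPerm u hu, ⟨⇑f, f.strictMono, fun s t => (rankPerm_lt_iff u hu s t).symm⟩, ?_, ?_⟩
  · -- case A : ρ q < ρ p
    intro hA
    constructor
    · apply Fin.ext
      rw [rankPerm_apply]
      show rank u im2 = m - 1
      have : (Finset.univ.filter fun t => u t < u im2) = Finset.univ.erase im2 := by
        ext t
        simp only [Finset.mem_filter, Finset.mem_univ, true_and, Finset.mem_erase, and_true]
        constructor
        · intro ht
          rintro rfl
          exact absurd ht (lt_irrefl _)
        · intro ht
          by_cases h1 : (t : ℕ) = m - 1
          · have : t = im1 := Fin.ext h1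
            subst this
            rw [hudef]; simp only []
            rw [hfq, hfp]; exact hA
          · have h2 : (t : ℕ) < m - 2 := by
              have := t.isLt
              have : (t : ℕ) ≠ m - 2 := fun e => ht (Fin.ext e)
              omega
            calc u t < w := hval t h2
            _ ≤ ρ q := hwq
            _ < ρ p := hA
            _ = u im2 := by rw [hudef]; simp only []; rw [hfp]
      rw [rank, this, Finset.card_erase_of_mem (Finset.mem_univ _), Finset.card_univ,
        Fintype.card_fin]
    · apply Fin.ext
      rw [rankPerm_apply]
      show rank u im1 = m - 2
      have : (Finset.univ.filter fun t => u t < u im1)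
          = Finset.univ.filter fun t : Fin m => (t : ℕ) < m - 2 := by
        ext t
        simp only [Finset.mem_filter, Finset.mem_univ, true_and]
        constructor
        · intro ht
          by_cases h1 : (t : ℕ) = m - 2
          · exfalso
            have : t = im2 := Fin.ext h1
            subst this
            rw [hudef] at ht; simp only [] at ht
            rw [hfp, hfq] at ht
            exact absurd hA (asymm ht)
          · by_cases h2 : (t : ℕ) = m - 1
            · exfalso
              have : t = im1 := Fin.ext h2
              subst this
              exact absurd ht (lt_irrefl _)
            · have := t.isLt; omega
        · intro ht
          calc u t < w := hval t ht
          _ ≤ ρ q := hwq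
          _ = u im1 := by rw [hudef]; simp only []; rw [hfq]
      rw [rank, this, card_val_lt m (m - 2) (by omega)]
  · -- case B : ρ p < ρ q
    intro hB
    constructor
    · apply Fin.ext
      rw [rankPerm_apply]
      show rank u im2 = m - 2
      have : (Finset.univ.filter fun t => u t < u im2)
          = Finset.univ.filter fun t : Fin m => (t : ℕ) < m - 2 := by
        ext t
        simp only [Finset.mem_filter, Finset.mem_univ, true_and]
        constructor
        · intro ht
          by_cases h1 : (t : ℕ) = m - 1
          · exfalso
            have : t = im1 := Fin.ext h1
            subst this
            rw [hudef] at ht; simp only [] at ht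
            rw [hfp, hfq] at ht
            exact absurd hB (asymm ht)
          · by_cases h2 : (t : ℕ) = m - 2
            · exfalso
              have : t = im2 := Fin.ext h2
              subst this
              exact absurd ht (lt_irrefl _)
            · have := t.isLt; omega
        · intro ht
          calc u t < w := hval t ht
          _ ≤ ρ p := hwp
          _ = u im2 := by rw [hudef]; simp only []; rw [hfp]
      rw [rank, this, card_val_lt m (m - 2) (by omega)]
    · apply Fin.ext
      rw [rankPerm_apply]
      show rank u im1 = m - 1
      have : (Finset.univ.filter fun t => u t < u im1) = Finset.univ.erase im1 := by
        ext t
        simp only [Finset.mem_filter, Finset.mem_univ, true_and, Finset.mem_erase, and_true]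
        constructor
        · intro ht
          rintro rfl
          exact absurd ht (lt_irrefl _)
        · intro ht
          by_cases h1 : (t : ℕ) = m - 2
          · have : t = im2 := Fin.ext h1
            subst this
            rw [hudef]; simp only []
            rw [hfq, hfp]; exact hB
          · have h2 : (t : ℕ) < m - 2 := by
              have := t.isLt
              have : (t : ℕ) ≠ m - 1 := fun e => ht (Fin.ext e)
              omega
            calc u t < w := hval t h2
            _ ≤ ρ p := hwp
            _ < ρ q := hB
            _ = u im1 := by rw [hudef]; simp only []; rw [hfq]
      rw [rank, this, Finset.card_erase_of_mem (Finset.mem_univ _), Finset.card_univ,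
        Fintype.card_fin]

lemma extractA {ρ : Equiv.Perm (Fin n)} {τ : Equiv.Perm (Fin m)} (hm : 2 ≤ m)
    (h2 : τ ⟨m - 2, by omega⟩ = ⟨m - 1, by omega⟩) (h1 : τ ⟨m - 1, by omega⟩ = ⟨m - 2, by omega⟩)
    (hC : Contains ρ τ) :
    ∃ p q : Fin n, p < q ∧ ρ q < ρ p ∧ m - 2 ≤ cnt (⇑ρ) p (ρ q) := by
  obtain ⟨f, hf, hiff⟩ := hC
  have hm2 : m - 2 < m := by omega
  have hm1 : m - 1 < m := by omega
  have hlt : (⟨m - 2, hm2⟩ : Fin m) < ⟨m - 1, hm1⟩ := by rw [Fin.mk_lt_mk]; omega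
  have hτ : τ ⟨m - 1, hm1⟩ < τ ⟨m - 2, hm2⟩ := by
    rw [h1, h2, Fin.mk_lt_mk]; omega
  have hv : ρ (f ⟨m - 1, hm1⟩) < ρ (f ⟨m - 2, hm2⟩) := (hiff _ _).mpr hτ
  refine ⟨f ⟨m - 2, hm2⟩, f ⟨m - 1, hm1⟩, hf hlt, hv, ?_⟩
  have hcv := card_val_lt m (m - 2) (by omega)
  have hle : ((Finset.univ : Finset (Fin m)).filter fun s : Fin m => (s : ℕ) < m - 2).card
      ≤ (Finset.univ.filter fun j =>
          j < f ⟨m - 2, hm2⟩ ∧ ρ j < ρ (f ⟨m - 1, hm1⟩)).card := by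
    apply Finset.card_le_card_of_injOn f
    swap
    · exact fun a _ b _ hab => hf.injective hab
    intro s hs
    simp only [Finset.mem_coe, Finset.mem_filter, Finset.mem_univ, true_and] at *
    have hsval : (s : ℕ) < m - 2 := hs
    have hsl : s < (⟨m - 2, hm2⟩ : Fin m) := hsval
    refine ⟨hf hsl, ?_⟩
    have hτs : τ s < τ ⟨m - 1, hm1⟩ := by
      have hlt' := (τ s).isLt
      have e2 : (τ s : ℕ) ≠ m - 1 := by
        intro e
        have hts : τ s = τ ⟨m - 2, hm2⟩ := by rw [h2]; exact Fin.ext e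
        have : (s : ℕ) = ((⟨m - 2, hm2⟩ : Fin m) : ℕ) := congrArg Fin.val (τ.injective hts)
        simp only [] at this
        omega
      have e1 : (τ s : ℕ) ≠ m - 2 := by
        intro e
        have hts : τ s = τ ⟨m - 1, hm1⟩ := by rw [h1]; exact Fin.ext e
        have : (s : ℕ) = ((⟨m - 1, hm1⟩ : Fin m) : ℕ) := congrArg Fin.val (τ.injective hts)
        simp only [] at this
        omega
      rw [h1, Fin.lt_iff_val_lt_val]
      simp only []
      omega
    exact (hiff _ _).mpr hτs
  unfold cnt
  omega

lemma extractB {ρ : Equiv.Perm (Fin n)} {τ : Equiv.Perm (Fin m)} (hm : 2 ≤ m)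
    (h2 : τ ⟨m - 2, by omega⟩ = ⟨m - 2, by omega⟩) (h1 : τ ⟨m - 1, by omega⟩ = ⟨m - 1, by omega⟩)
    (hC : Contains ρ τ) :
    ∃ p q : Fin n, p < q ∧ ρ p < ρ q ∧ m - 2 ≤ cnt (⇑ρ) p (ρ p) := by
  obtain ⟨f, hf, hiff⟩ := hC
  have hm2 : m - 2 < m := by omega
  have hm1 : m - 1 < m := by omega
  have hlt : (⟨m - 2, hm2⟩ : Fin m) < ⟨m - 1, hm1⟩ := by rw [Fin.mk_lt_mk]; omega
  have hτ : τ ⟨m - 2, hm2⟩ < τ ⟨m - 1, hm1⟩ := by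
    rw [h1, h2, Fin.mk_lt_mk]; omega
  have hv : ρ (f ⟨m - 2, hm2⟩) < ρ (f ⟨m - 1, hm1⟩) := (hiff _ _).mpr hτ
  refine ⟨f ⟨m - 2, hm2⟩, f ⟨m - 1, hm1⟩, hf hlt, hv, ?_⟩
  have hcv := card_val_lt m (m - 2) (by omega)
  have hle : ((Finset.univ : Finset (Fin m)).filter fun s : Fin m => (s : ℕ) < m - 2).card
      ≤ (Finset.univ.filter fun j =>
          j < f ⟨m - 2, hm2⟩ ∧ ρ j < ρ (f ⟨m - 2, hm2⟩)).card := by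
    apply Finset.card_le_card_of_injOn f
    swap
    · exact fun a _ b _ hab => hf.injective hab
    intro s hs
    simp only [Finset.mem_coe, Finset.mem_filter, Finset.mem_univ, true_and] at *
    have hsval : (s : ℕ) < m - 2 := hs
    have hsl : s < (⟨m - 2, hm2⟩ : Fin m) := hsval
    refine ⟨hf hsl, ?_⟩
    have hτs : τ s < τ ⟨m - 2, hm2⟩ := by
      have hlt' := (τ s).isLt
      have e2 : (τ s : ℕ) ≠ m - 2 := by
        intro e
        have hts : τ s = τ ⟨m - 2, hm2⟩ := by rw [h2]; exact Fin.ext e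
        have : (s : ℕ) = ((⟨m - 2, hm2⟩ : Fin m) : ℕ) := congrArg Fin.val (τ.injective hts)
        simp only [] at this
        omega
      have e1 : (τ s : ℕ) ≠ m - 1 := by
        intro e
        have hts : τ s = τ ⟨m - 1, hm1⟩ := by rw [h1]; exact Fin.ext e
        have : (s : ℕ) = ((⟨m - 1, hm1⟩ : Fin m) : ℕ) := congrArg Fin.val (τ.injective hts)
        simp only [] at this
        omega
      rw [h2, Fin.lt_iff_val_lt_val]
      simp only []
      omega
    exact (hiff _ _).mpr hτs
  unfold cnt
  omega

end Patterns

section Sigma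

variable (m : ℕ)

/-- The set of non-low positions. -/
def Ns (π : Equiv.Perm (Fin n)) : Finset (Fin n) :=
  Finset.univ.filter fun i => ¬ low m (⇑π) i

/-- The set of values at non-low positions. -/
def Vs (π : Equiv.Perm (Fin n)) : Finset (Fin n) := (Ns m π).image π

lemma mem_Ns {π : Equiv.Perm (Fin n)} {i : Fin n} : i ∈ Ns m π ↔ ¬ low m (⇑π) i := by
  simp [Ns]

lemma card_Vs (π : Equiv.Perm (Fin n)) : (Vs m π).card = (Ns m π).card :=
  Finset.card_image_of_injective _ π.injective

/-- increasing enumeration of non-low positions -/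
def embN (π : Equiv.Perm (Fin n)) : Fin (Ns m π).card ↪o Fin n :=
  (Ns m π).orderEmbOfFin rfl

/-- increasing enumeration of the values at non-low positions -/
def embV (π : Equiv.Perm (Fin n)) : Fin (Ns m π).card ↪o Fin n :=
  (Vs m π).orderEmbOfFin (card_Vs m π)

/-- the index of a non-low position in the increasing enumeration -/
def idx (π : Equiv.Perm (Fin n)) (i : Fin n) (h : i ∈ Ns m π) : Fin (Ns m π).card :=
  ((Ns m π).orderIsoOfFin rfl).symm ⟨i, h⟩

lemma embN_idx (π : Equiv.Perm (Fin n)) (i : Fin n) (h : i ∈ Ns m π) :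
    embN m π (idx m π i h) = i := by
  have : ((Ns m π).orderIsoOfFin rfl) (((Ns m π).orderIsoOfFin rfl).symm ⟨i, h⟩) = ⟨i, h⟩ :=
    ((Ns m π).orderIsoOfFin rfl).apply_symm_apply _
  have := congrArg Subtype.val this
  rw [Finset.coe_orderIsoOfFin_apply] at this
  exact this

lemma idx_lt (π : Equiv.Perm (Fin n)) {i j : Fin n} (hi : i ∈ Ns m π) (hj : j ∈ Ns m π)
    (hij : i < j) : idx m π i hi < idx m π j hj := by
  have := (embN m π).strictMono.lt_iff_lt (a := idx m π i hi) (b := idx m π j hj)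
  rw [embN_idx, embN_idx] at this
  exact this.mp hij

lemma idx_val (π : Equiv.Perm (Fin n)) (i : Fin n) (h : i ∈ Ns m π) :
    ((idx m π i h : Fin (Ns m π).card) : ℕ) = ((Ns m π).filter (· < i)).card := by
  have := card_filter_lt_emb (Ns m π) rfl (idx m π i h)
  rw [show (Ns m π).orderEmbOfFin rfl = embN m π from rfl, embN_idx] at this
  exact this.symm

/-- The rearrangement map: values at low positions are kept, values at non-low positions
are rearranged decreasingly. -/
def sig (π : Equiv.Perm (Fin n)) : Fin n → Fin n := fun i =>
  if h : low m (⇑π) i then π i else embV m π (Fin.rev (idx m π i ((mem_Ns m).mpr h)))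

lemma sig_low {π : Equiv.Perm (Fin n)} {i : Fin n} (h : low m (⇑π) i) :
    sig m π i = π i := dif_pos h

lemma sig_nonlow {π : Equiv.Perm (Fin n)} {i : Fin n} (h : ¬ low m (⇑π) i) :
    sig m π i = embV m π (Fin.rev (idx m π i ((mem_Ns m).mpr h))) := dif_neg h

lemma sig_mem_Vs {π : Equiv.Perm (Fin n)} {i : Fin n} (h : ¬ low m (⇑π) i) :
    sig m π i ∈ Vs m π := by
  rw [sig_nonlow m h]
  exact Finset.orderEmbOfFin_mem _ _ _

lemma mem_Vs_iff {π : Equiv.Perm (Fin n)} {i : Fin n} : π i ∈ Vs m π ↔ ¬ low m (⇑π) i := by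
  constructor
  · intro h
    rw [Vs] at h
    obtain ⟨j, hj, hji⟩ := Finset.mem_image.mp h
    have : j = i := π.injective hji
    subst this
    exact (mem_Ns m).mp hj
  · intro h
    exact Finset.mem_image_of_mem _ ((mem_Ns m).mpr h)

/-- σ is decreasing along non-low positions. -/
lemma sig_anti {π : Equiv.Perm (Fin n)} {i j : Fin n} (hi : ¬ low m (⇑π) i)
    (hj : ¬ low m (⇑π) j) (hij : i < j) : sig m π j < sig m π i := by
  rw [sig_nonlow m hi, sig_nonlow m hj]
  apply (embV m π).strictMono
  rw [Fin.rev_lt_rev]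
  exact idx_lt m π _ _ hij

/-- the number of elements of `Vs` above `sig p` (for a non-low `p`)
equals the number of non-low positions before `p` -/
lemma card_Vs_above {π : Equiv.Perm (Fin n)} {p : Fin n} (hp : ¬ low m (⇑π) p) :
    ((Vs m π).filter (sig m π p < ·)).card = ((Ns m π).filter (· < p)).card := by
  rw [sig_nonlow m hp]
  rw [show Vs m π = Vs m π from rfl]
  have := card_filter_emb_lt (Vs m π) (card_Vs m π) (Fin.rev (idx m π p ((mem_Ns m).mpr hp)))
  rw [show (Vs m π).orderEmbOfFin (card_Vs m π) = embV m π from rfl] at this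
  rw [this, Fin.val_rev, ← idx_val m π p ((mem_Ns m).mpr hp)]
  have := (idx m π p ((mem_Ns m).mpr hp)).isLt
  omega

/-- the set of non-low positions `≤ p` has one more element than the count before `p` -/
lemma card_Ns_le {π : Equiv.Perm (Fin n)} {p : Fin n} (hp : ¬ low m (⇑π) p) :
    ((Ns m π).filter (· ≤ p)).card = ((Ns m π).filter (· < p)).card + 1 := by
  have : (Ns m π).filter (· ≤ p) = insert p ((Ns m π).filter (· < p)) := by
    ext x
    simp only [Finset.mem_filter, Finset.mem_insert]
    constructor
    · rintro ⟨hx, hle⟩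
      rcases eq_or_lt_of_le hle with h1 | h1
      · exact Or.inl h1
      · exact Or.inr ⟨hx, h1⟩
    · rintro (rfl | ⟨hx, hlt⟩)
      · exact ⟨(mem_Ns m).mpr hp, le_refl _⟩
      · exact ⟨hx, le_of_lt hlt⟩
  rw [this, Finset.card_insert_of_notMem (by simp)]

/-- F3: the value of σ at a non-low position dominates its value at any later low position. -/
lemma sig_nonlow_gt_low {π : Equiv.Perm (Fin n)} {p q : Fin n} (hp : ¬ low m (⇑π) p)
    (hq : low m (⇑π) q) (hpq : p < q) : sig m π q < sig m π p := by
  rw [sig_low m hq]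
  by_contra hcon
  push_neg at hcon
  -- sig p ≤ π q
  -- injection: non-low positions ≤ p have values > π q, all in Vs
  have hinj : ((Ns m π).filter (· ≤ p)).card ≤ ((Vs m π).filter (π q < ·)).card := by
    apply Finset.card_le_card_of_injOn π
    · intro j hj
      simp only [Finset.mem_coe, Finset.mem_filter] at hj ⊢
      refine ⟨Finset.mem_image_of_mem _ hj.1, ?_⟩
      exact lt_of_nonlow_low π.injective ((mem_Ns m).mp hj.1) hq (lt_of_le_of_lt hj.2 hpq)
    · exact fun a _ b _ hab => π.injective hab
  have hsub : ((Vs m π).filter (π q < ·)).card ≤ ((Vs m π).filter (sig m π p < ·)).card := by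
    apply Finset.card_le_card
    intro v hv
    simp only [Finset.mem_filter] at hv ⊢
    exact ⟨hv.1, lt_of_le_of_lt hcon hv.2⟩
  have h1 := card_Vs_above m hp
  have h2 := card_Ns_le m hp
  omega

/-- F4: low positions of π are low positions of σ, with the identical count set. -/
lemma sig_cnt_low {π : Equiv.Perm (Fin n)} {i : Fin n} (hi : low m (⇑π) i) :
    cnt (sig m π) i (sig m π i) = cnt (⇑π) i (π i) := by
  unfold cnt
  congr 1
  ext j
  simp only [Finset.mem_filter, Finset.mem_univ, true_and, and_congr_right_iff]
  intro hj
  by_cases hlj : low m (⇑π) j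
  · rw [sig_low m hlj, sig_low m hi]
  · constructor
    · intro h
      exfalso
      have := sig_nonlow_gt_low m hlj hi hj
      exact absurd (h.trans this) (lt_irrefl _)
    · intro h
      exfalso
      have := lt_of_nonlow_low π.injective hlj hi hj
      exact absurd (h.trans this) (lt_irrefl _)

lemma sig_low_low {π : Equiv.Perm (Fin n)} {i : Fin n} (hi : low m (⇑π) i) :
    low m (sig m π) i := by
  unfold low
  rw [sig_cnt_low m hi]
  exact hi

/-- F5: non-low positions of π are non-low positions of σ. -/
lemma sig_nonlow_nonlow (hm : 2 ≤ m) {π : Equiv.Perm (Fin n)} {p : Fin n}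
    (hp : ¬ low m (⇑π) p) : ¬ low m (sig m π) p := by
  -- choose the non-low position r ≤ p with minimal value
  have hne : ((Ns m π).filter (· ≤ p)).Nonempty := ⟨p, by
    simp only [Finset.mem_filter]
    exact ⟨(mem_Ns m).mpr hp, le_refl _⟩⟩
  obtain ⟨r, hrmem, hrmin⟩ := Finset.exists_min_image _ (⇑π) hne
  simp only [Finset.mem_filter] at hrmem
  obtain ⟨hrN, hrp⟩ := hrmem
  have hrlow : ¬ low m (⇑π) r := (mem_Ns m).mp hrN
  -- π r ≤ sig p
  have hrle : π r ≤ sig m π p := by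
    by_contra hcon
    push_neg at hcon
    have hinj : ((Ns m π).filter (· ≤ p)).card ≤ ((Vs m π).filter (sig m π p < ·)).card := by
      apply Finset.card_le_card_of_injOn π
      · intro j hj
        simp only [Finset.mem_coe, Finset.mem_filter] at hj ⊢
        refine ⟨Finset.mem_image_of_mem _ hj.1, ?_⟩
        exact lt_of_lt_of_le hcon (hrmin j (by simp only [Finset.mem_filter]; exact hj))
      · exact fun a _ b _ hab => π.injective hab
    have h1 := card_Vs_above m hp
    have h2 := card_Ns_le m hp
    omega
  -- all contributors to cnt at r are low, and they contribute to cnt of sig at p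
  have hcnt : cnt (⇑π) r (π r) ≤ cnt (sig m π) p (sig m π p) := by
    apply Finset.card_le_card
    intro j hj
    simp only [Finset.mem_filter, Finset.mem_univ, true_and] at hj ⊢
    obtain ⟨hjr, hjv⟩ := hj
    have hjlow : low m (⇑π) j := by
      by_contra hjn
      have : π r ≤ π j := hrmin j (by
        simp only [Finset.mem_filter]
        exact ⟨(mem_Ns m).mpr hjn, le_of_lt (lt_of_lt_of_le hjr hrp)⟩)
      exact absurd (lt_of_le_of_lt this hjv) (lt_irrefl _)
    refine ⟨lt_of_lt_of_le hjr hrp, ?_⟩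
    rw [sig_low m hjlow]
    exact lt_of_lt_of_le hjv hrle
  rw [nonlow_iff hm] at hrlow ⊢
  omega

lemma sig_low_iff (hm : 2 ≤ m) {π : Equiv.Perm (Fin n)} (i : Fin n) :
    low m (sig m π) i ↔ low m (⇑π) i := by
  constructor
  · intro h
    by_contra hc
    exact sig_nonlow_nonlow m hm hc h
  · exact sig_low_low m

lemma sig_injective (π : Equiv.Perm (Fin n)) : Function.Injective (sig m π) := by
  intro i j hij
  by_cases hi : low m (⇑π) i <;> by_cases hj : low m (⇑π) j
  · rw [sig_low m hi, sig_low m hj] at hij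
    exact π.injective hij
  · exfalso
    rw [sig_low m hi] at hij
    have : π i ∈ Vs m π := by rw [hij]; exact sig_mem_Vs m hj
    exact absurd hi ((mem_Vs_iff m).mp this)
  · exfalso
    rw [sig_low m hj] at hij
    have : π j ∈ Vs m π := by rw [← hij]; exact sig_mem_Vs m hi
    exact absurd hj ((mem_Vs_iff m).mp this)
  · rw [sig_nonlow m hi, sig_nonlow m hj] at hij
    have h1 := (embV m π).injective hij
    have h2 := Fin.rev_injective h1
    have : (⟨i, (mem_Ns m).mpr hi⟩ : {x // x ∈ Ns m π}) = ⟨j, (mem_Ns m).mpr hj⟩ :=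
      ((Ns m π).orderIsoOfFin rfl).symm.injective h2
    exact congrArg Subtype.val this

/-- the permutation σ -/
noncomputable def sigPerm (π : Equiv.Perm (Fin n)) : Equiv.Perm (Fin n) :=
  Equiv.ofBijective (sig m π) (Finite.injective_iff_bijective.1 (sig_injective m π))

lemma sigPerm_apply (π : Equiv.Perm (Fin n)) (i : Fin n) : sigPerm m π i = sig m π i := rfl

end Sigma

lemma sigPerm_coe (m : ℕ) (π : Equiv.Perm (Fin n)) : ⇑(sigPerm m π) = sig m π := rfl

/-- σ avoids all patterns of B. -/
lemma sig_avoidsB (hm : 2 ≤ m) (π : Equiv.Perm (Fin n)) :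
    ∀ τ : Equiv.Perm (Fin m), τ ⟨m - 2, by omega⟩ = ⟨m - 2, by omega⟩ →
      τ ⟨m - 1, by omega⟩ = ⟨m - 1, by omega⟩ → ¬ Contains (sigPerm m π) τ := by
  intro τ h2 h1 hC
  obtain ⟨p, q, hpq, hv, hc⟩ := extractB hm h2 h1 hC
  rw [sigPerm_coe] at hc
  rw [sigPerm_apply, sigPerm_apply] at hv
  have hpn : ¬ low m (sig m π) p := by
    rw [nonlow_iff hm]
    exact hc
  have hpπ : ¬ low m (⇑π) p := fun h => hpn (sig_low_low m h)
  by_cases hqπ : low m (⇑π) q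
  · exact absurd (hv.trans (sig_nonlow_gt_low m hpπ hqπ hpq)) (lt_irrefl _)
  · exact absurd (hv.trans (sig_anti m hpπ hqπ hpq)) (lt_irrefl _)

/-- the non-low values are exactly the values of σ on non-low positions -/
lemma image_sig_Ns (m : ℕ) (π : Equiv.Perm (Fin n)) :
    (Ns m π).image (sig m π) = Vs m π := by
  apply Finset.eq_of_subset_of_card_le
  · intro v hv
    obtain ⟨j, hj, rfl⟩ := Finset.mem_image.mp hv
    exact sig_mem_Vs m ((mem_Ns m).mp hj)
  · rw [card_Vs, Finset.card_image_of_injective _ (sig_injective m π)]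

/-- no violation of the A-condition -/
def noViolA (m : ℕ) (ρ : Equiv.Perm (Fin n)) : Prop :=
  ¬ ∃ p q : Fin n, p < q ∧ ρ q < ρ p ∧ m - 2 ≤ cnt (⇑ρ) p (ρ q)

lemma first_diff_aux (hm : 2 ≤ m) {π π' : Equiv.Perm (Fin n)} (hA : noViolA m π)
    {p : Fin n} (hd : ∀ j, j < p → π j = π' j) (hlt : π' p < π p)
    (hp' : ¬ low m (⇑π') p) : False := by
  have hq : π (π.symm (π' p)) = π' p := π.apply_symm_apply _
  set q := π.symm (π' p) with hqdef
  have hqe : q ≠ p := by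
    intro e
    rw [e] at hq
    rw [hq] at hlt
    exact lt_irrefl _ hlt
  have hqp : ¬ q < p := by
    intro hlt'
    have h1 : π q = π' q := hd q hlt'
    have h2 : π' q = π' p := by rw [← h1, hq]
    exact hqe (π'.injective h2)
  have hpq : p < q := lt_of_le_of_ne (not_lt.mp hqp) (Ne.symm hqe)
  apply hA
  refine ⟨p, q, hpq, by rw [hq]; exact hlt, ?_⟩
  have hcnt : cnt (⇑π) p (π q) = cnt (⇑π') p (π' p) := by
    unfold cnt
    congr 1
    ext j
    simp only [Finset.mem_filter, Finset.mem_univ, true_and, and_congr_right_iff]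
    intro hj
    rw [hd j hj, hq]
  rw [hcnt]
  rw [nonlow_iff hm] at hp'
  exact hp'

/-- uniqueness of the A-avoiding arrangement given the low data -/
lemma perm_eq_of_skeleton (hm : 2 ≤ m) {π π' : Equiv.Perm (Fin n)} (hA : noViolA m π)
    (hA' : noViolA m π') (hlow : ∀ i, low m (⇑π) i ↔ low m (⇑π') i)
    (hval : ∀ i, low m (⇑π) i → π i = π' i) : π = π' := by
  by_contra hne
  have hDne : (Finset.univ.filter fun i => π i ≠ π' i).Nonempty := by
    by_contra hD
    rw [Finset.not_nonempty_iff_eq_empty] at hD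
    apply hne
    apply Equiv.ext
    intro i
    by_contra hi
    have : i ∈ Finset.univ.filter fun i => π i ≠ π' i := by
      simp only [Finset.mem_filter, Finset.mem_univ, true_and]
      exact hi
    rw [hD] at this
    exact absurd this (Finset.notMem_empty i)
  set p := (Finset.univ.filter fun i => π i ≠ π' i).min' hDne with hpdef
  have hpmem : π p ≠ π' p := by
    have := (Finset.univ.filter fun i => π i ≠ π' i).min'_mem hDne
    simp only [Finset.mem_filter, Finset.mem_univ, true_and] at this
    exact this
  have hd : ∀ j, j < p → π j = π' j := by
    intro j hj
    by_contra hc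
    have : p ≤ j := Finset.min'_le _ j (by
      simp only [Finset.mem_filter, Finset.mem_univ, true_and]
      exact hc)
    exact absurd (lt_of_lt_of_le hj this) (lt_irrefl _)
  have hplow : ¬ low m (⇑π) p := fun h => hpmem (hval p h)
  have hplow' : ¬ low m (⇑π') p := fun h => hplow ((hlow p).mpr h)
  rcases lt_trichotomy (π p) (π' p) with h | h | h
  · exact first_diff_aux hm hA' (fun j hj => (hd j hj).symm) h hplow
  · exact hpmem h
  · exact first_diff_aux hm hA hd h hplow'

section Swap

lemma mul_swap_apply_ne (ρ : Equiv.Perm (Fin n)) {p q x : Fin n} (h1 : x ≠ p) (h2 : x ≠ q) :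
    (ρ * Equiv.swap p q) x = ρ x := by
  rw [Equiv.Perm.mul_apply, Equiv.swap_apply_of_ne_of_ne h1 h2]

lemma mul_swap_apply_left (ρ : Equiv.Perm (Fin n)) (p q : Fin n) :
    (ρ * Equiv.swap p q) p = ρ q := by
  rw [Equiv.Perm.mul_apply, Equiv.swap_apply_left]

lemma mul_swap_apply_right (ρ : Equiv.Perm (Fin n)) (p q : Fin n) :
    (ρ * Equiv.swap p q) q = ρ p := by
  rw [Equiv.Perm.mul_apply, Equiv.swap_apply_right]

lemma viol_nonlow_left (hm : 2 ≤ m) {ρ : Equiv.Perm (Fin n)} {p q : Fin n} (hv : ρ q < ρ p)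
    (hc : m - 2 ≤ cnt (⇑ρ) p (ρ q)) : ¬ low m (⇑ρ) p := by
  rw [nonlow_iff hm]
  exact le_trans hc (cnt_mono _ (le_refl p) (le_of_lt hv))

lemma viol_nonlow_right (hm : 2 ≤ m) {ρ : Equiv.Perm (Fin n)} {p q : Fin n} (hpq : p < q)
    (hc : m - 2 ≤ cnt (⇑ρ) p (ρ q)) : ¬ low m (⇑ρ) q := by
  rw [nonlow_iff hm]
  exact le_trans hc (cnt_mono _ (le_of_lt hpq) (le_refl _))

lemma swap_low_iff (hm : 2 ≤ m) {ρ : Equiv.Perm (Fin n)} {p q : Fin n}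
    (hpq : p < q) (hv : ρ q < ρ p) (hc : m - 2 ≤ cnt (⇑ρ) p (ρ q)) (i : Fin n) :
    low m (⇑(ρ * Equiv.swap p q)) i ↔ low m (⇑ρ) i := by
  have hpn := viol_nonlow_left hm hv hc
  have hqn := viol_nonlow_right hm hpq hc
  by_cases hip : i = p
  · subst hip
    apply iff_of_false _ hpn
    rw [nonlow_iff hm]
    have happ : (ρ * Equiv.swap i q) i = ρ q := mul_swap_apply_left ρ i q
    rw [happ]
    have : cnt (⇑(ρ * Equiv.swap i q)) i (ρ q) = cnt (⇑ρ) i (ρ q) := by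
      unfold cnt
      congr 1
      ext j
      simp only [Finset.mem_filter, Finset.mem_univ, true_and, and_congr_right_iff]
      intro hj
      rw [mul_swap_apply_ne ρ (ne_of_lt hj) (ne_of_lt (hj.trans hpq))]
    rw [this]
    exact hc
  by_cases hiq : i = q
  · subst hiq
    apply iff_of_false _ hqn
    rw [nonlow_iff hm]
    have happ : (ρ * Equiv.swap p i) i = ρ p := mul_swap_apply_right ρ p i
    rw [happ]
    rw [nonlow_iff hm] at hqn
    refine le_trans hqn (Finset.card_le_card ?_)
    intro j hj
    simp only [Finset.mem_filter, Finset.mem_univ, true_and] at hj ⊢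
    obtain ⟨hji, hjv⟩ := hj
    have hjp : j ≠ p := by
      intro e
      rw [e] at hjv
      exact absurd (hjv.trans hv) (lt_irrefl _)
    refine ⟨hji, ?_⟩
    rw [mul_swap_apply_ne ρ hjp (ne_of_lt hji)]
    exact hjv.trans hv
  -- i ≠ p, i ≠ q
  have happ : (ρ * Equiv.swap p q) i = ρ i := mul_swap_apply_ne ρ hip hiq
  by_cases hi1 : i < p
  · -- everything before i is untouched
    have : cnt (⇑(ρ * Equiv.swap p q)) i ((ρ * Equiv.swap p q) i) = cnt (⇑ρ) i (ρ i) := by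
      rw [happ]
      unfold cnt
      congr 1
      ext j
      simp only [Finset.mem_filter, Finset.mem_univ, true_and, and_congr_right_iff]
      intro hj
      rw [mul_swap_apply_ne ρ (ne_of_lt (hj.trans hi1)) (ne_of_lt ((hj.trans hi1).trans hpq))]
    unfold low
    rw [this]
  by_cases hi2 : i < q
  · -- p < i < q
    have hpi : p < i := lt_of_le_of_ne (not_lt.mp hi1) (Ne.symm hip)
    constructor
    · -- nonlow ρ i → nonlow ρ' i  (contrapositive)
      intro hlow'
      by_contra hnl
      have hsub : (Finset.univ.filter fun j => j < i ∧ ρ j < ρ i)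
          ⊆ Finset.univ.filter fun j =>
            j < i ∧ (ρ * Equiv.swap p q) j < (ρ * Equiv.swap p q) i := by
        intro j hj
        simp only [Finset.mem_filter, Finset.mem_univ, true_and] at hj ⊢
        obtain ⟨hji, hjv⟩ := hj
        refine ⟨hji, ?_⟩
        rw [happ]
        by_cases hjp : j = p
        · subst hjp
          rw [mul_swap_apply_left]
          exact hv.trans hjv
        · rw [mul_swap_apply_ne ρ hjp (ne_of_lt (hji.trans hi2))]
          exact hjv
      have hcard := Finset.card_le_card hsub
      rw [nonlow_iff hm] at hnl
      unfold low cnt at hlow'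
      unfold cnt at hnl
      omega
    · -- low ρ i → low ρ' i : the counts agree
      intro hlow
      have hlt : ρ i < ρ q := by
        by_contra hcon
        push_neg at hcon
        have hne2 : ρ q ≠ ρ i := fun e => hiq (ρ.injective e.symm)
        have h3 : ρ q < ρ i := lt_of_le_of_ne hcon hne2
        have h4 : cnt (⇑ρ) p (ρ q) ≤ cnt (⇑ρ) i (ρ i) :=
          le_trans (cnt_mono _ (le_refl p) (le_of_lt h3)) (cnt_mono _ (le_of_lt hpi) (le_refl _))
        unfold low at hlow
        omega
      have : cnt (⇑(ρ * Equiv.swap p q)) i ((ρ * Equiv.swap p q) i) = cnt (⇑ρ) i (ρ i) := by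
        rw [happ]
        unfold cnt
        congr 1
        ext j
        simp only [Finset.mem_filter, Finset.mem_univ, true_and, and_congr_right_iff]
        intro hj
        by_cases hjp : j = p
        · subst hjp
          rw [mul_swap_apply_left]
          constructor
          · intro h; exact absurd (hlt.trans h)  (lt_irrefl _)
          · intro h; exact absurd ((hlt.trans hv).trans h) (lt_irrefl _)
        · rw [mul_swap_apply_ne ρ hjp (ne_of_lt (hj.trans hi2))]
      unfold low
      rw [this]
      exact hlow
  · -- q < i
    have hqi : q < i := lt_of_le_of_ne (not_lt.mp hi2) (Ne.symm hiq)
    have hswlt : ∀ x : Fin n, x < i ↔ Equiv.swap p q x < i := by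
      intro x
      by_cases hx1 : x = p
      · subst hx1
        rw [Equiv.swap_apply_left]
        exact ⟨fun _ => hqi, fun _ => (hpq.trans hqi)⟩
      by_cases hx2 : x = q
      · subst hx2
        rw [Equiv.swap_apply_right]
        exact ⟨fun _ => hpq.trans hqi, fun _ => hqi⟩
      · rw [Equiv.swap_apply_of_ne_of_ne hx1 hx2]
    have : cnt (⇑(ρ * Equiv.swap p q)) i ((ρ * Equiv.swap p q) i) = cnt (⇑ρ) i (ρ i) := by
      rw [happ]
      unfold cnt
      have himg : (Finset.univ.filter fun j => j < i ∧ (ρ * Equiv.swap p q) j < ρ i)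
          = (Finset.univ.filter fun j => j < i ∧ ρ j < ρ i).image (Equiv.swap p q) := by
        ext x
        simp only [Finset.mem_filter, Finset.mem_univ, true_and, Finset.mem_image]
        constructor
        · rintro ⟨hx, hvx⟩
          refine ⟨Equiv.swap p q x, ⟨(hswlt x).mp hx, ?_⟩, Equiv.swap_apply_self _ _ _⟩
          rw [Equiv.Perm.mul_apply] at hvx
          exact hvx
        · rintro ⟨y, ⟨hy, hvy⟩, rfl⟩
          refine ⟨(hswlt y).mp hy, ?_⟩
          rw [Equiv.Perm.mul_apply, Equiv.swap_apply_self]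
          exact hvy
      rw [himg, Finset.card_image_of_injective _ (Equiv.swap p q).injective]
    unfold low
    rw [this]

end Swap

/-- inversion count -/
def invc (ρ : Equiv.Perm (Fin n)) : ℕ :=
  (Finset.univ.filter fun x : Fin n × Fin n => x.1 < x.2 ∧ ρ x.2 < ρ x.1).card

lemma swap_invc {ρ : Equiv.Perm (Fin n)} {p q : Fin n} (hpq : p < q) (hv : ρ q < ρ p) :
    invc (ρ * Equiv.swap p q) < invc ρ := by
  classical
  set S : Finset (Fin n × Fin n) :=
    Finset.univ.filter fun x : Fin n × Fin n => x.1 < x.2 ∧ ρ x.2 < ρ x.1 with hSdef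
  have hmem : (p, q) ∈ S := by
    simp only [hSdef, Finset.mem_filter, Finset.mem_univ, true_and]
    exact ⟨hpq, hv⟩
  have hle : invc (ρ * Equiv.swap p q) ≤ (S.erase (p, q)).card := by
    apply Finset.card_le_card_of_injOn
      (fun x : Fin n × Fin n =>
        (if x.1 = p ∧ q < x.2 then q else if x.1 = q then p else x.1,
         if x.2 = q ∧ x.1 < p then p else if x.2 = p then q else x.2))
    · rintro ⟨x1, x2⟩ hx
      simp only [Finset.mem_coe, Finset.mem_filter, Finset.mem_univ, true_and] at hx
      obtain ⟨hxlt, hxv⟩ := hx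
      rw [Equiv.Perm.mul_apply, Equiv.Perm.mul_apply] at hxv
      simp only [Finset.mem_coe, Finset.mem_erase, hSdef, Finset.mem_filter, Finset.mem_univ, true_and,
        Prod.mk.injEq, ne_eq]
      split_ifs
      -- 1 : (x1 = p ∧ q < x2) and (x2 = q ∧ x1 < p)
      · obtain ⟨rfl, hq2⟩ := ‹x1 = p ∧ q < x2›
        obtain ⟨rfl, _⟩ := ‹x2 = q ∧ x1 < x1›
        exact absurd hq2 (lt_irrefl _)
      -- 2 : (x1 = p ∧ q < x2) and (x2 = p)
      · obtain ⟨rfl, hq2⟩ := ‹x1 = p ∧ q < x2›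
        rw [‹x2 = x1›] at hq2
        exact absurd (hpq.trans hq2) (lt_irrefl _)
      -- 3 : (x1 = p ∧ q < x2), plain second : output (q, x2)
      · obtain ⟨rfl, hq2⟩ := ‹x1 = p ∧ q < x2›
        have h2p : x2 ≠ x1 := fun e => absurd (e ▸ hxlt) (lt_irrefl _)
        have h2q : x2 ≠ q := fun e => absurd (e ▸ hq2) (lt_irrefl _)
        rw [Equiv.swap_apply_left, Equiv.swap_apply_of_ne_of_ne h2p h2q] at hxv
        refine ⟨fun h => h2q h.2, hq2, hxv⟩
      -- 4 : x1 = q and (x2 = q ∧ x1 < p)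
      · have h1 : q < p := by rw [← ‹x1 = q›]; exact ‹x2 = q ∧ x1 < p›.2
        exact absurd (h1.trans hpq) (lt_irrefl _)
      -- 5 : x1 = q and x2 = p
      · have h1 : q < p := by rw [← ‹x1 = q›, ← ‹x2 = p›]; exact hxlt
        exact absurd (h1.trans hpq) (lt_irrefl _)
      -- 6 : x1 = q, plain second : output (p, x2)
      · rw [‹x1 = q›] at hxlt hxv
        have h2p : x2 ≠ p := fun e => absurd (e ▸ (hpq.trans hxlt)) (lt_irrefl _)
        have h2q : x2 ≠ q := fun e => absurd (e ▸ hxlt) (lt_irrefl _)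
        rw [Equiv.swap_apply_right, Equiv.swap_apply_of_ne_of_ne h2p h2q] at hxv
        refine ⟨fun h => h2q h.2, hpq.trans hxlt, hxv⟩
      -- 7 : plain first, (x2 = q ∧ x1 < p) : output (x1, p)
      · obtain ⟨rfl, h1p⟩ := ‹x2 = q ∧ x1 < p›
        have h1q : x1 ≠ x2 := ne_of_lt hxlt
        have h1pne : x1 ≠ p := ne_of_lt h1p
        rw [Equiv.swap_apply_right, Equiv.swap_apply_of_ne_of_ne h1pne h1q] at hxv
        refine ⟨fun h => h1pne h.1, h1p, hxv⟩
      -- 8 : plain first, x2 = p : output (x1, q)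
      · rw [‹x2 = p›] at hxlt hxv
        have h1p : x1 ≠ p := ne_of_lt hxlt
        have h1q : x1 ≠ q := fun e => absurd (e ▸ (hxlt.trans hpq)) (lt_irrefl _)
        rw [Equiv.swap_apply_left, Equiv.swap_apply_of_ne_of_ne h1p h1q] at hxv
        refine ⟨fun h => h1p h.1, hxlt.trans hpq, hxv⟩
      -- 9 : all plain : output (x1, x2)
      · by_cases h1p : x1 = p
        · subst h1p
          have h2p : x2 ≠ x1 := fun e => absurd (e ▸ hxlt) (lt_irrefl _)
          have h2q : x2 ≠ q := by
            intro e
            subst e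
            rw [Equiv.swap_apply_left, Equiv.swap_apply_right] at hxv
            exact absurd (hxv.trans hv) (lt_irrefl _)
          rw [Equiv.swap_apply_left, Equiv.swap_apply_of_ne_of_ne h2p h2q] at hxv
          exact ⟨fun h => h2q h.2, hxlt, hxv.trans hv⟩
        · by_cases h1q : x1 = q
          · exact absurd h1q ‹¬x1 = q›
          · rw [Equiv.swap_apply_of_ne_of_ne h1p h1q] at hxv
            by_cases h2q : x2 = q
            · subst h2q
              rw [Equiv.swap_apply_right] at hxv
              exact ⟨fun h => h1p h.1, hxlt, hv.trans hxv⟩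
            · by_cases h2p : x2 = p
              · exact absurd h2p ‹¬x2 = p›
              · rw [Equiv.swap_apply_of_ne_of_ne h2p h2q] at hxv
                exact ⟨fun h => h1p h.1, hxlt, hxv⟩
    · rintro ⟨x1, x2⟩ hx ⟨y1, y2⟩ hy h
      simp only [Finset.coe_filter, Finset.mem_univ, true_and, Set.mem_setOf_eq] at hx hy
      have hxlt := hx.1
      have hylt := hy.1
      simp only [Prod.mk.injEq] at h ⊢
      obtain ⟨h1, h2⟩ := h
      split_ifs at h1 h2 <;> fin_omega
  have hcard := Finset.card_erase_of_mem hmem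
  have hpos : 0 < S.card := Finset.card_pos.mpr ⟨(p, q), hmem⟩
  unfold invc
  rw [← hSdef]
  unfold invc at hle
  omega

/-- invariant maintained by the descent towards an A-avoider -/
def Pinv (m : ℕ) (σ ρ : Equiv.Perm (Fin n)) : Prop :=
  (∀ i, low m (⇑ρ) i ↔ low m (⇑σ) i) ∧ (∀ i, low m (⇑σ) i → ρ i = σ i) ∧ Vs m ρ = Vs m σ

lemma Ns_congr {ρ σ : Equiv.Perm (Fin n)} (h : ∀ i, low m (⇑ρ) i ↔ low m (⇑σ) i) :
    Ns m ρ = Ns m σ := by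
  unfold Ns
  apply Finset.filter_congr
  intro i _
  rw [h i]

lemma swap_Pinv (hm : 2 ≤ m) {σ ρ : Equiv.Perm (Fin n)} {p q : Fin n} (hP : Pinv m σ ρ)
    (hpq : p < q) (hv : ρ q < ρ p) (hc : m - 2 ≤ cnt (⇑ρ) p (ρ q)) :
    Pinv m σ (ρ * Equiv.swap p q) := by
  obtain ⟨hlow, hval, hV⟩ := hP
  have hli := swap_low_iff hm hpq hv hc
  refine ⟨fun i => (hli i).trans (hlow i), ?_, ?_⟩
  · intro i hσ
    have hρ : low m (⇑ρ) i := (hlow i).mpr hσ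
    have hip : i ≠ p := fun e => (viol_nonlow_left hm hv hc) (e ▸ hρ)
    have hiq : i ≠ q := fun e => (viol_nonlow_right hm hpq hc) (e ▸ hρ)
    rw [mul_swap_apply_ne ρ hip hiq]
    exact hval i hσ
  · rw [← hV]
    have hNs : Ns m (ρ * Equiv.swap p q) = Ns m ρ := Ns_congr (fun i => hli i)
    unfold Vs
    rw [hNs]
    have hpN : p ∈ Ns m ρ := (mem_Ns m).mpr (viol_nonlow_left hm hv hc)
    have hqN : q ∈ Ns m ρ := (mem_Ns m).mpr (viol_nonlow_right hm hpq hc)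
    have hswapN : (Ns m ρ).image (Equiv.swap p q) = Ns m ρ := by
      ext x
      rw [Finset.mem_image]
      constructor
      · rintro ⟨y, hy, rfl⟩
        by_cases hyp : y = p
        · subst hyp; rw [Equiv.swap_apply_left]; exact hqN
        by_cases hyq : y = q
        · subst hyq; rw [Equiv.swap_apply_right]; exact hpN
        · rw [Equiv.swap_apply_of_ne_of_ne hyp hyq]; exact hy
      · intro hx
        refine ⟨Equiv.swap p q x, ?_, Equiv.swap_apply_self _ _ _⟩
        by_cases hxp : x = p
        · subst hxp; rw [Equiv.swap_apply_left]; exact hqN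
        by_cases hxq : x = q
        · subst hxq; rw [Equiv.swap_apply_right]; exact hpN
        · rw [Equiv.swap_apply_of_ne_of_ne hxp hxq]; exact hx
    calc (Ns m ρ).image ⇑(ρ * Equiv.swap p q)
        = ((Ns m ρ).image ⇑(Equiv.swap p q)).image ⇑ρ := by
          rw [Finset.image_image]
          rfl
      _ = (Ns m ρ).image ⇑ρ := by rw [hswapN]

lemma descend (hm : 2 ≤ m) (σ : Equiv.Perm (Fin n)) :
    ∀ N : ℕ, ∀ ρ : Equiv.Perm (Fin n), invc ρ ≤ N → Pinv m σ ρ →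
      ∃ ρ₀, Pinv m σ ρ₀ ∧ noViolA m ρ₀ := by
  intro N
  induction N with
  | zero =>
    intro ρ hN hP
    refine ⟨ρ, hP, ?_⟩
    rintro ⟨p, q, hpq, hv, hc⟩
    have hmem : (p, q) ∈ Finset.univ.filter
        (fun x : Fin n × Fin n => x.1 < x.2 ∧ ρ x.2 < ρ x.1) := by
      simp only [Finset.mem_filter, Finset.mem_univ, true_and]
      exact ⟨hpq, hv⟩
    have := Finset.card_pos.mpr ⟨_, hmem⟩
    unfold invc at hN
    omega
  | succ k ih =>
    intro ρ hN hP
    by_cases hA : noViolA m ρ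
    · exact ⟨ρ, hP, hA⟩
    · obtain ⟨p, q, hpq, hv, hc⟩ := not_not.mp hA
      have hlt := swap_invc hpq hv
      exact ih (ρ * Equiv.swap p q) (by omega) (swap_Pinv hm hP hpq hv hc)

lemma noViolA_of_avoids (hm : 2 ≤ m) {π : Equiv.Perm (Fin n)}
    (hav : ∀ τ : Equiv.Perm (Fin m), τ ⟨m - 2, by omega⟩ = ⟨m - 1, by omega⟩ →
      τ ⟨m - 1, by omega⟩ = ⟨m - 2, by omega⟩ → ¬ Contains π τ) : noViolA m π := by
  rintro ⟨p, q, hpq, hv, hc⟩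
  obtain ⟨τ, hCτ, hAend, -⟩ := build hm hpq (le_of_lt hv) (le_refl _) (ne_of_gt hv) hc
  obtain ⟨e2, e1⟩ := hAend hv
  exact hav τ e2 e1 hCτ

lemma avoids_of_noViolA (hm : 2 ≤ m) {π : Equiv.Perm (Fin n)} (h : noViolA m π) :
    ∀ τ : Equiv.Perm (Fin m), τ ⟨m - 2, by omega⟩ = ⟨m - 1, by omega⟩ →
      τ ⟨m - 1, by omega⟩ = ⟨m - 2, by omega⟩ → ¬ Contains π τ := by
  intro τ e2 e1 hC
  obtain ⟨p, q, hpq, hv, hc⟩ := extractA hm e2 e1 hC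
  exact h ⟨p, q, hpq, hv, hc⟩

lemma dec_of_avoidsB (hm : 2 ≤ m) {σ : Equiv.Perm (Fin n)}
    (hav : ∀ τ : Equiv.Perm (Fin m), τ ⟨m - 2, by omega⟩ = ⟨m - 2, by omega⟩ →
      τ ⟨m - 1, by omega⟩ = ⟨m - 1, by omega⟩ → ¬ Contains σ τ) :
    ∀ a b : Fin n, ¬ low m (⇑σ) a → ¬ low m (⇑σ) b → a < b → σ b < σ a := by
  intro a b ha hb hab
  by_contra hcon
  push_neg at hcon
  have hne : σ a ≠ σ b := fun e => (ne_of_lt hab) (σ.injective e)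
  have hlt : σ a < σ b := lt_of_le_of_ne hcon hne
  have hc : m - 2 ≤ cnt (⇑σ) a (σ a) := (nonlow_iff hm _ _).mp ha
  obtain ⟨τ, hCτ, -, hBend⟩ := build hm hab (le_refl _) (le_of_lt hlt) hne hc
  obtain ⟨e2, e1⟩ := hBend hlt
  exact hav τ e2 e1 hCτ

lemma sig_eq_of_skeleton (hm : 2 ≤ m) {σ ρ : Equiv.Perm (Fin n)}
    (hdec : ∀ a b : Fin n, ¬ low m (⇑σ) a → ¬ low m (⇑σ) b → a < b → σ b < σ a)
    (hlow : ∀ i, low m (⇑ρ) i ↔ low m (⇑σ) i) (hval : ∀ i, low m (⇑σ) i → ρ i = σ i)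
    (hV : Vs m ρ = Vs m σ) : sig m ρ = ⇑σ := by
  funext i
  by_cases hi : low m (⇑ρ) i
  · rw [sig_low m hi]
    exact hval i ((hlow i).mp hi)
  · rw [sig_nonlow m hi]
    have hNs : Ns m ρ = Ns m σ := Ns_congr hlow
    have hmemN : ∀ j : Fin (Ns m ρ).card, embN m ρ j ∈ Ns m σ := by
      intro j
      rw [← hNs]
      exact Finset.orderEmbOfFin_mem _ _ _
    have hg : ∀ j : Fin (Ns m ρ).card, σ (embN m ρ (Fin.rev j)) ∈ Vs m ρ := by
      intro j
      rw [hV]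
      exact (mem_Vs_iff m).mpr ((mem_Ns m).mp (hmemN (Fin.rev j)))
    have hmono : StrictMono (fun j : Fin (Ns m ρ).card => σ (embN m ρ (Fin.rev j))) := by
      intro j j' hjj
      have h1 : Fin.rev j' < Fin.rev j := Fin.rev_lt_rev.mpr hjj
      have h2 : embN m ρ (Fin.rev j') < embN m ρ (Fin.rev j) := (embN m ρ).strictMono h1
      exact hdec _ _ ((mem_Ns m).mp (hmemN (Fin.rev j'))) ((mem_Ns m).mp (hmemN (Fin.rev j))) h2
    have huniq : (fun j : Fin (Ns m ρ).card => σ (embN m ρ (Fin.rev j)))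
        = ⇑((Vs m ρ).orderEmbOfFin (card_Vs m ρ)) :=
      Finset.orderEmbOfFin_unique _ hg hmono
    have hembV : ⇑(embV m ρ) = fun j : Fin (Ns m ρ).card => σ (embN m ρ (Fin.rev j)) :=
      huniq.symm
    rw [hembV]
    simp only []
    rw [Fin.rev_rev, embN_idx]

lemma sig_inj (hm : 2 ≤ m) {π π' : Equiv.Perm (Fin n)} (h : noViolA m π) (h' : noViolA m π')
    (he : sigPerm m π = sigPerm m π') : π = π' := by
  have hfun : sig m π = sig m π' := by
    rw [← sigPerm_coe, ← sigPerm_coe, he]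
  have hlow : ∀ i, low m (⇑π) i ↔ low m (⇑π') i := by
    intro i
    rw [← sig_low_iff m hm (π := π) i, ← sig_low_iff m hm (π := π') i, hfun]
  apply perm_eq_of_skeleton hm h h' hlow
  intro i hi
  have h1 : sig m π i = π i := sig_low m hi
  have h2 : sig m π' i = π' i := sig_low m ((hlow i).mp hi)
  rw [← h1, ← h2, hfun]

end AB

theorem bijection_Am_avoiders_to_Bm_avoiders (n m : ℕ) (hn : 1 ≤ n) (hm : 2 ≤ m) :
    ∃ F : {π : Equiv.Perm (Fin n) // ∀ τ : Equiv.Perm (Fin m),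
            τ ⟨m - 2, by omega⟩ = ⟨m - 1, by omega⟩ → τ ⟨m - 1, by omega⟩ = ⟨m - 2, by omega⟩ →
              ¬ Contains π τ} →
          {σ : Equiv.Perm (Fin n) // ∀ τ : Equiv.Perm (Fin m),
            τ ⟨m - 2, by omega⟩ = ⟨m - 2, by omega⟩ → τ ⟨m - 1, by omega⟩ = ⟨m - 1, by omega⟩ →
              ¬ Contains σ τ},
      Function.Bijective F ∧
      ∀ π, -- `F π` agrees with `π` on low positions
           (∀ i : Fin n, LowPos n m π.1 i → (F π).1 i = π.1 i) ∧
           -- and places the remaining values on the remaining positions in decreasing order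
           (∀ i j : Fin n, ¬ LowPos n m π.1 i → ¬ LowPos n m π.1 j → i < j →
              (F π).1 j < (F π).1 i) := by
  classical
  refine ⟨fun π => ⟨AB.sigPerm m π.1, AB.sig_avoidsB hm π.1⟩, ⟨?_, ?_⟩, ?_⟩
  · -- injective
    intro a b hab
    apply Subtype.ext
    exact AB.sig_inj hm (AB.noViolA_of_avoids hm a.2) (AB.noViolA_of_avoids hm b.2)
      (congrArg Subtype.val hab)
  · -- surjective
    rintro ⟨σ, hσ⟩
    have hdec := AB.dec_of_avoidsB hm hσ
    obtain ⟨ρ₀, hP, hA⟩ := AB.descend hm σ (AB.invc σ) σ (le_refl _)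
      ⟨fun i => Iff.rfl, fun i _ => rfl, rfl⟩
    refine ⟨⟨ρ₀, AB.avoids_of_noViolA hm hA⟩, ?_⟩
    apply Subtype.ext
    show AB.sigPerm m ρ₀ = σ
    apply Equiv.ext
    intro i
    have hsk := AB.sig_eq_of_skeleton hm hdec hP.1 hP.2.1 hP.2.2
    rw [AB.sigPerm_apply, hsk]
  · -- properties
    intro π
    constructor
    · intro i hi
      rw [AB.lowPos_iff] at hi
      exact AB.sig_low m hi
    · intro i j hi hj hij
      rw [AB.lowPos_iff] at hi hj
      exact AB.sig_anti m hi hj hij
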